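/- Let K ⊆ ℂ be a nonempty compact convex set and let φ be an entire function of exponential type. Then φ(D) maps Exp(K) into Exp(K) and is continuous with respect to the norms ‖·‖_{K,n}: for every n ≥ 1 there exist m ≥ 1 and a constant C > 0 such that ‖φ(D)f‖_{K,n} ≤ C‖f‖_{K,m} for all f ∈ Exp(K). -/

import Mathlib

open Filter Complex Set

/-- `log` with the convention `log 0 = -∞`, valued in the extended reals. -/
noncomputable def elog (x : ℝ) : EReal :=
  if x = 0 then (⊥ : EReal) else ((Real.log x : ℝ) : EReal)

/-- Maximum modulus `M_f(r) = max_{|z|=r} |f z|`. -/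
noncomputable def maxMod (f : ℂ → ℂ) (r : ℝ) : ℝ :=
  sSup ((fun z => ‖f z‖) '' Metric.sphere (0 : ℂ) r)

/-- The exponential type `τ(f) = limsup_{r→∞} log M_f(r) / r` (valued in `EReal`,
with the convention `log 0 = -∞`; note `log (M_f(r)^{1/r}) = log M_f(r) / r` for `r > 0`). -/
noncomputable def expType (f : ℂ → ℂ) : EReal :=
  Filter.limsup (fun r : ℝ => elog (maxMod f r ^ (1 / r))) Filter.atTop

/-- The indicator function `h_f(θ) = limsup_{r→∞} log |f (r e^{iθ})| / r`. -/
noncomputable def indicatorFn (f : ℂ → ℂ) (θ : ℝ) : EReal :=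
  Filter.limsup
    (fun r : ℝ => elog (‖f ((r : ℂ) * Complex.exp ((θ : ℂ) * Complex.I))‖ ^ (1 / r)))
    Filter.atTop

/-- Support function `H_K(z) = sup {Re (z u) : u ∈ K}`. -/
noncomputable def suppFn (K : Set ℂ) (z : ℂ) : ℝ :=
  sSup ((fun u => (z * u).re) '' K)

/-- The differential operator `φ(D) f = ∑ (φ^{(n)}(0)/n!) f^{(n)}`. -/
noncomputable def phiD (φ : ℂ → ℂ) (f : ℂ → ℂ) : ℂ → ℂ :=
  fun z => ∑' n : ℕ, (iteratedDeriv n φ 0 / (Nat.factorial n : ℂ)) * iteratedDeriv n f z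

/-- The norm `‖f‖_{K,n} = sup_z |f z| e^{-H_K(z) - |z|/n}`. -/
noncomputable def expNorm (K : Set ℂ) (n : ℕ) (f : ℂ → ℂ) : ℝ :=
  sSup (Set.range fun z : ℂ => ‖f z‖ * Real.exp (-suppFn K z - ‖z‖ / (n : ℝ)))

/-- Membership in `Exp(K)`: entire and `‖f‖_{K,n} < ∞` for all `n ≥ 1`. -/
def memExp (K : Set ℂ) (f : ℂ → ℂ) : Prop :=
  Differentiable ℂ f ∧ ∀ n : ℕ, 1 ≤ n →
    BddAbove (Set.range fun z : ℂ =>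
      ‖f z‖ * Real.exp (-suppFn K z - ‖z‖ / (n : ℝ)))

/-- Lower density of a set of natural numbers. -/
noncomputable def lowerDensity (A : Set ℕ) : ℝ :=
  Filter.liminf (fun N : ℕ => ((A ∩ Set.Iic N).ncard : ℝ) / (N : ℝ)) Filter.atTop

/-- `f` is hypercyclic for `φ(D)` on `H(ℂ)`. -/
def HC (φ f : ℂ → ℂ) : Prop :=
  ∀ g : ℂ → ℂ, Differentiable ℂ g → ∀ L : Set ℂ, IsCompact L → ∀ ε : ℝ, 0 < ε →
    ∃ m : ℕ, ∀ z ∈ L, ‖(phiD φ)^[m] f z - g z‖ < ε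

/-- `f` is frequently hypercyclic for `φ(D)` on `H(ℂ)`. -/
def FHC (φ f : ℂ → ℂ) : Prop :=
  ∀ g : ℂ → ℂ, Differentiable ℂ g → ∀ L : Set ℂ, IsCompact L → ∀ ε : ℝ, 0 < ε →
    0 < lowerDensity {m : ℕ | ∀ z ∈ L, ‖(phiD φ)^[m] f z - g z‖ < ε}

/-- `f` is hypercyclic for `φ(D)` on `Exp(K)`. -/
def HCExp (K : Set ℂ) (φ f : ℂ → ℂ) : Prop :=
  memExp K f ∧ ∀ g : ℂ → ℂ, memExp K g → ∀ n : ℕ, 1 ≤ n → ∀ ε : ℝ, 0 < ε →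
    ∃ m : ℕ, expNorm K n (fun z => (phiD φ)^[m] f z - g z) < ε

/-- `f` is frequently hypercyclic for `φ(D)` on `Exp(K)`. -/
def FHCExp (K : Set ℂ) (φ f : ℂ → ℂ) : Prop :=
  memExp K f ∧ ∀ g : ℂ → ℂ, memExp K g → ∀ n : ℕ, 1 ≤ n → ∀ ε : ℝ, 0 < ε →
    0 < lowerDensity {m : ℕ | expNorm K n (fun z => (phiD φ)^[m] f z - g z) < ε}

/-- The Borel transform `Bf(z) = ∑ f^{(n)}(0) z^{-(n+1)}`. -/
noncomputable def borelT (f : ℂ → ℂ) : ℂ → ℂ :=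
  fun z => ∑' n : ℕ, iteratedDeriv n f 0 / z ^ (n + 1)

/-- The transform `Φ_φ f (z) = ∑ (φ(D)^n f)(0) z^n / n!`. -/
noncomputable def PhiT (φ f : ℂ → ℂ) : ℂ → ℂ :=
  fun z => ∑' n : ℕ, ((phiD φ)^[n] f 0) * z ^ n / (Nat.factorial n : ℂ)

/-!
Finite exponential type gives `|φ w| ≤ C e^{τ|w|}`, so Cauchy's estimate on the circles of radius
`n + 1` bounds the Taylor coefficients by `|φ^{(n)}(0)| ≤ C Bⁿ`. If `|f z| ≤ A e^{w z}` for an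
`L`-Lipschitz weight `w`, Cauchy's estimate on the circle of radius `2B` about `z` gives
`|f^{(n)}(z)| ≤ n! (2B)^{-n} A e^{2BL} e^{w z}`, so the series defining `φ(D) f` is dominated by
`2^{-n}` times a locally bounded function. Since `K` is bounded, `w = H_K + |·|/n` is Lipschitz,
and this yields `‖φ(D) f‖_{K,n} ≤ 2 C e^{2BL} ‖f‖_{K,n}`.
-/

open scoped NNReal

lemma lt_exp_of_elog_lt {x τ : ℝ} (hx : 0 ≤ x) (h : elog x < τ) : x < Real.exp τ := by
  rcases hx.eq_or_lt with rfl | hpos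
  · exact Real.exp_pos τ
  · rw [elog, if_neg hpos.ne', EReal.coe_lt_coe_iff] at h
    exact (Real.log_lt_iff_lt_exp hpos).mp h

lemma norm_le_maxMod {f : ℂ → ℂ} (hf : Continuous f) {z : ℂ} :
    ‖f z‖ ≤ maxMod f ‖z‖ :=
  le_csSup ((isCompact_sphere 0 ‖z‖).image (continuous_norm.comp hf)).bddAbove
    ⟨z, by simp, rfl⟩

lemma exists_norm_le_mul_exp_of_expType_lt_top {f : ℂ → ℂ} (hf : Continuous f)
    (hτ : expType f < ⊤) : ∃ C τ : ℝ, 0 < C ∧ ∀ z, ‖f z‖ ≤ C * Real.exp (τ * ‖z‖) := by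
  obtain ⟨τ, hτ, -⟩ := EReal.lt_iff_exists_real_btwn.mp hτ
  obtain ⟨R, hR⟩ := eventually_atTop.mp (eventually_lt_of_limsup_lt hτ)
  have hfar : ∀ z : ℂ, max R 1 ≤ ‖z‖ → ‖f z‖ ≤ Real.exp (τ * ‖z‖) := by
    intro z hz
    have hr : 0 < ‖z‖ := lt_of_lt_of_le one_pos (le_of_max_le_right hz)
    have hM : 0 ≤ maxMod f ‖z‖ := (norm_nonneg _).trans (norm_le_maxMod hf)
    have h := lt_exp_of_elog_lt (Real.rpow_nonneg hM _) (hR ‖z‖ (le_of_max_le_left hz))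
    rw [one_div, Real.rpow_inv_lt_iff_of_pos hM (Real.exp_pos τ).le hr,
      ← Real.exp_mul] at h
    exact (norm_le_maxMod hf).trans h.le
  obtain ⟨C, hC⟩ := (isCompact_closedBall (0 : ℂ) (max R 1)).exists_bound_of_continuousOn
    hf.continuousOn
  refine ⟨max C 1, max τ 0, by positivity, fun z => ?_⟩
  have hexp : 1 ≤ Real.exp (max τ 0 * ‖z‖) := Real.one_le_exp (by positivity)
  rcases le_or_gt ‖z‖ (max R 1) with hz | hz
  · calc ‖f z‖ ≤ C := by simpa using hC z (by simpa using hz)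
      _ ≤ max C 1 * 1 := by simp
      _ ≤ max C 1 * Real.exp (max τ 0 * ‖z‖) := by gcongr
  · calc ‖f z‖ ≤ Real.exp (τ * ‖z‖) := hfar z hz.le
      _ ≤ 1 * Real.exp (max τ 0 * ‖z‖) := by rw [one_mul]; gcongr; exact le_max_left _ _
      _ ≤ max C 1 * Real.exp (max τ 0 * ‖z‖) := by gcongr; exact le_max_right _ _

lemma exists_norm_iteratedDeriv_le_of_expType_lt_top {f : ℂ → ℂ} (hf : Differentiable ℂ f)
    (hτ : expType f < ⊤) : ∃ C B : ℝ, 0 < C ∧ 0 < B ∧ ∀ n, ‖iteratedDeriv n f 0‖ ≤ C * B ^ n := by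
  obtain ⟨C, τ, hC, hgrowth⟩ := exists_norm_le_mul_exp_of_expType_lt_top hf.continuous hτ
  refine ⟨C * Real.exp τ, Real.exp τ, by positivity, Real.exp_pos τ, fun n => ?_⟩
  have hr : (0 : ℝ) < n + 1 := by positivity
  have hcauchy := Complex.norm_iteratedDeriv_le_of_forall_mem_sphere_norm_le n hr hf.diffContOnCl
    fun z hz => (hgrowth z).trans_eq (by rw [mem_sphere_zero_iff_norm.mp hz])
  calc ‖iteratedDeriv n f 0‖
      ≤ n.factorial * (C * Real.exp (τ * (n + 1))) / ((n : ℝ) + 1) ^ n := hcauchy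
    _ ≤ C * Real.exp (τ * (n + 1)) := by
        rw [div_le_iff₀ (by positivity), mul_comm]
        gcongr
        exact_mod_cast (Nat.factorial_le_pow n).trans (Nat.pow_le_pow_left n.le_succ n)
    _ = C * Real.exp τ * Real.exp τ ^ n := by
        rw [← Real.exp_nat_mul, mul_assoc, ← Real.exp_add]; ring_nf

section WeightedBounds

variable {w : ℂ → ℝ} {L : ℝ≥0} {f : ℂ → ℂ} {A : ℝ}

lemma norm_iteratedDeriv_le_of_norm_le_exp (hw : LipschitzWith L w) (hf : Differentiable ℂ f)
    (hA : ∀ z, ‖f z‖ ≤ A * Real.exp (w z)) {s : ℝ} (hs : 0 < s) (n : ℕ) (z : ℂ) :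
    ‖iteratedDeriv n f z‖ ≤ n.factorial / s ^ n * (A * Real.exp (L * s)) * Real.exp (w z) := by
  have hA0 : 0 ≤ A := nonneg_of_mul_nonneg_left ((norm_nonneg _).trans (hA 0)) (Real.exp_pos _)
  have hsphere : ∀ y ∈ Metric.sphere z s, ‖f y‖ ≤ A * Real.exp (L * s) * Real.exp (w z) := by
    intro y hy
    rw [mul_assoc, ← Real.exp_add]
    refine (hA y).trans (mul_le_mul_of_nonneg_left (Real.exp_le_exp.mpr ?_) hA0)
    have hdist : (L : ℝ) * dist y z ≤ L * s := by rw [Metric.mem_sphere.mp hy]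
    linarith [hw.le_add_mul y z]
  calc ‖iteratedDeriv n f z‖ ≤ n.factorial * (A * Real.exp (L * s) * Real.exp (w z)) / s ^ n :=
        Complex.norm_iteratedDeriv_le_of_forall_mem_sphere_norm_le n hs hf.diffContOnCl hsphere
    _ = _ := by ring

variable {φ : ℂ → ℂ} {C B : ℝ}

lemma norm_phiD_term_le (hw : LipschitzWith L w) (hf : Differentiable ℂ f)
    (hA : ∀ z, ‖f z‖ ≤ A * Real.exp (w z)) (hB : 0 < B)
    (hφ : ∀ n, ‖iteratedDeriv n φ 0‖ ≤ C * B ^ n) (n : ℕ) (z : ℂ) :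
    ‖iteratedDeriv n φ 0 / n.factorial * iteratedDeriv n f z‖ ≤
      C * A * Real.exp (L * (2 * B)) * Real.exp (w z) * (1 / 2) ^ n := by
  have hf' := norm_iteratedDeriv_le_of_norm_le_exp hw hf hA (by positivity : 0 < 2 * B) n z
  have hfac : (0 : ℝ) < n.factorial := by positivity
  have hC : 0 ≤ C := nonneg_of_mul_nonneg_left ((norm_nonneg _).trans (hφ 0)) (by simp)
  rw [norm_mul, norm_div, Complex.norm_natCast]
  calc ‖iteratedDeriv n φ 0‖ / n.factorial * ‖iteratedDeriv n f z‖
      ≤ C * B ^ n / n.factorial *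
          (n.factorial / (2 * B) ^ n * (A * Real.exp (L * (2 * B))) * Real.exp (w z)) := by
        gcongr
        exact hφ n
    _ = _ := by rw [one_div_pow, mul_pow]; field_simp

lemma norm_phiD_le (hw : LipschitzWith L w) (hf : Differentiable ℂ f)
    (hA : ∀ z, ‖f z‖ ≤ A * Real.exp (w z)) (hB : 0 < B)
    (hφ : ∀ n, ‖iteratedDeriv n φ 0‖ ≤ C * B ^ n) (z : ℂ) :
    ‖phiD φ f z‖ ≤ 2 * C * A * Real.exp (L * (2 * B)) * Real.exp (w z) := by
  have hsum := hasSum_geometric_two.mul_left (C * A * Real.exp (L * (2 * B)) * Real.exp (w z))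
  exact (tsum_of_norm_bounded hsum (norm_phiD_term_le hw hf hA hB hφ · z)).trans_eq (by ring)

lemma differentiable_phiD (hw : LipschitzWith L w) (hf : Differentiable ℂ f)
    (hA : ∀ z, ‖f z‖ ≤ A * Real.exp (w z)) (hB : 0 < B)
    (hφ : ∀ n, ‖iteratedDeriv n φ 0‖ ≤ C * B ^ n) : Differentiable ℂ (phiD φ f) := by
  intro z₀
  have hA0 : 0 ≤ A := nonneg_of_mul_nonneg_left ((norm_nonneg _).trans (hA 0)) (Real.exp_pos _)
  have hC : 0 ≤ C := nonneg_of_mul_nonneg_left ((norm_nonneg _).trans (hφ 0)) (by simp)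
  have hball : DifferentiableOn ℂ (phiD φ f) (Metric.ball z₀ 1) := by
    refine Complex.differentiableOn_tsum_of_summable_norm
      (summable_geometric_two.mul_left
        (C * A * Real.exp (L * (2 * B)) * Real.exp (w z₀ + L)))
      (fun n => ((hf.contDiff (n := ⊤)).differentiable_iteratedDeriv n
        (WithTop.coe_lt_top _)).differentiableOn.const_mul _) Metric.isOpen_ball
      fun n z hz => (norm_phiD_term_le hw hf hA hB hφ n z).trans ?_
    rw [mul_comm _ ((1 / 2 : ℝ) ^ n), mul_comm _ ((1 / 2 : ℝ) ^ n)]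
    gcongr
    have hdist : (L : ℝ) * dist z z₀ ≤ L * 1 := by gcongr; exact (Metric.mem_ball.mp hz).le
    linarith [hw.le_add_mul z z₀]
  exact hball.differentiableAt (Metric.isOpen_ball.mem_nhds (Metric.mem_ball_self one_pos))

end WeightedBounds

section ExpK

variable {K : Set ℂ}

lemma lipschitzWith_suppFn (hne : K.Nonempty) {R : ℝ≥0} (hR : ∀ u ∈ K, ‖u‖ ≤ R) :
    LipschitzWith R (suppFn K) := by
  have hre : ∀ x u : ℂ, u ∈ K → (x * u).re ≤ R * ‖x‖ := fun x u hu =>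
    calc (x * u).re ≤ ‖x‖ * ‖u‖ := (Complex.re_le_norm _).trans (norm_mul x u).le
      _ ≤ R * ‖x‖ := by rw [mul_comm]; gcongr; exact hR u hu
  refine LipschitzWith.of_le_add_mul R fun x y => csSup_le (hne.image _) ?_
  rintro _ ⟨u, hu, rfl⟩
  have hy : (y * u).re ≤ suppFn K y :=
    le_csSup ⟨R * ‖y‖, by rintro _ ⟨v, hv, rfl⟩; exact hre y v hv⟩ ⟨u, hu, rfl⟩
  have hxy := hre (x - y) u hu
  rw [← dist_eq_norm] at hxy
  calc (x * u).re = (y * u).re + ((x - y) * u).re := by rw [← Complex.add_re]; ring_nf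
    _ ≤ suppFn K y + R * dist x y := add_le_add hy hxy

lemma lipschitzWith_suppFn_add_norm_div (hne : K.Nonempty) {R : ℝ≥0} (hR : ∀ u ∈ K, ‖u‖ ≤ R)
    {m : ℕ} (hm : 1 ≤ m) : LipschitzWith (R + 1) fun z => suppFn K z + ‖z‖ / m := by
  refine (lipschitzWith_suppFn hne hR).add (LipschitzWith.of_le_add fun x y => ?_)
  have hm' : (1 : ℝ) ≤ m := by exact_mod_cast hm
  have hx : ‖x‖ ≤ ‖y‖ + dist x y := by rw [dist_eq_norm]; exact norm_le_insert' x y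
  calc ‖x‖ / m ≤ (‖y‖ + dist x y) / m := by gcongr
    _ ≤ ‖y‖ / m + dist x y := by rw [add_div]; gcongr; exact div_le_self dist_nonneg hm'

lemma mul_exp_neg_le_iff {x a A : ℝ} : x * Real.exp (-a) ≤ A ↔ x ≤ A * Real.exp a := by
  rw [Real.exp_neg, ← div_eq_mul_inv, div_le_iff₀ (Real.exp_pos a)]

lemma norm_le_expNorm_mul_exp {f : ℂ → ℂ} (hf : memExp K f) {m : ℕ} (hm : 1 ≤ m) (z : ℂ) :
    ‖f z‖ ≤ expNorm K m f * Real.exp (suppFn K z + ‖z‖ / m) := by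
  rw [← mul_exp_neg_le_iff, neg_add']
  exact le_csSup (hf.2 m hm) ⟨z, rfl⟩

lemma bddAbove_and_expNorm_le_of_norm_le {f : ℂ → ℂ} {m : ℕ} {A : ℝ}
    (h : ∀ z, ‖f z‖ ≤ A * Real.exp (suppFn K z + ‖z‖ / m)) :
    BddAbove (range fun z => ‖f z‖ * Real.exp (-suppFn K z - ‖z‖ / m)) ∧ expNorm K m f ≤ A := by
  have hle : ∀ z, ‖f z‖ * Real.exp (-suppFn K z - ‖z‖ / m) ≤ A := fun z => by
    rw [← neg_add', mul_exp_neg_le_iff]; exact h z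
  exact ⟨⟨A, forall_mem_range.mpr hle⟩, csSup_le (range_nonempty _) (forall_mem_range.mpr hle)⟩

end ExpK

theorem stmt_6_general (K : Set ℂ) (hKne : K.Nonempty) (hKcomp : IsCompact K)
    (φ : ℂ → ℂ) (hφ : Differentiable ℂ φ) (hφτ : expType φ < ⊤) :
    (∀ f : ℂ → ℂ, memExp K f → memExp K (phiD φ f)) ∧
    (∀ n : ℕ, 1 ≤ n → ∃ m : ℕ, 1 ≤ m ∧ ∃ C : ℝ, 0 < C ∧
      ∀ f : ℂ → ℂ, memExp K f → expNorm K n (phiD φ f) ≤ C * expNorm K m f) := by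
  obtain ⟨C, B, hC, hB, hcoef⟩ := exists_norm_iteratedDeriv_le_of_expType_lt_top hφ hφτ
  obtain ⟨R, hR⟩ : ∃ R : ℝ≥0, ∀ u ∈ K, ‖u‖ ≤ R := by
    obtain ⟨R, hR⟩ := hKcomp.isBounded.exists_norm_le
    exact ⟨R.toNNReal, fun u hu => (hR u hu).trans (Real.le_coe_toNNReal R)⟩
  have hweight {m : ℕ} (hm : 1 ≤ m) := lipschitzWith_suppFn_add_norm_div hKne hR hm
  have hbound {f : ℂ → ℂ} (hf : memExp K f) {m : ℕ} (hm : 1 ≤ m) (z : ℂ) :=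
    norm_phiD_le (hweight hm) hf.1 (norm_le_expNorm_mul_exp hf hm) hB hcoef z
  refine ⟨fun f hf => ⟨differentiable_phiD (hweight le_rfl) hf.1
    (norm_le_expNorm_mul_exp hf le_rfl) hB hcoef, fun n hn => ?_⟩, fun n hn => ?_⟩
  · exact (bddAbove_and_expNorm_le_of_norm_le (hbound hf hn)).1
  · refine ⟨n, hn, 2 * C * Real.exp ((R + 1 : ℝ≥0) * (2 * B)), by positivity, fun f hf => ?_⟩
    refine (bddAbove_and_expNorm_le_of_norm_le fun z => (hbound hf hn z).trans_eq ?_).2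
    ring

/-- `φ(D)` is a continuous self-map of `Exp(K)`. -/
theorem stmt_6 (K : Set ℂ) (hKne : K.Nonempty) (hKcomp : IsCompact K) (hKconv : Convex ℝ K)
    (φ : ℂ → ℂ) (hφ : Differentiable ℂ φ) (hφτ : expType φ < ⊤) :
    (∀ f : ℂ → ℂ, memExp K f → memExp K (phiD φ f)) ∧
    (∀ n : ℕ, 1 ≤ n → ∃ m : ℕ, 1 ≤ m ∧ ∃ C : ℝ, 0 < C ∧
      ∀ f : ℂ → ℂ, memExp K f → expNorm K n (phiD φ f) ≤ C * expNorm K m f) :=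
  stmt_6_general K hKne hKcomp φ hφ hφτ
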